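/- Multiplication by r raises the m-index: r · Q_n^{k,m}(r) = √((n+m+1)(n+k+m+1)/((2n+k+m+1)(2n+k+m+2))) Q_n^{k,m+1}(r) + √(n(n+k)/((2n+k+m)(2n+k+m+1))) Q_{n-1}^{k,m+1}(r). -/

import Mathlib

/-!
In the variables `y = x + 1`, `z = x - 1` one has
`2ⁿ P_n^{(a,b)}(x) = ∑_{i+j=n} C(n+a, i) C(n+b, j) yⁱ zʲ` for natural `a, b`, and the contiguous
relation `(2n+a+b+1) P_n^{(a,b)} = (n+a+b+1) P_n^{(a,b+1)} + (n+a) P_{n-1}^{(a,b+1)}` (using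
`y - z = 2`) reduces to an identity between products of binomial coefficients. At `x = 2r² - 1`,
multiplied by `r^{m+1}`, it is the claim up to normalisation, and
`N_n^{k,m} = (n+k)! (n+m)! / (2 (2n+k+m+1) (n+k+m)! n!)` shows that the square roots in the
statement are exactly the ratios of the normalising factors `√N` involved.
-/

/-- The Jacobi polynomial `P_n^{(a,b)}(x)`. -/
noncomputable def jacobiP (n : ℕ) (a b : ℝ) (x : ℝ) : ℝ :=
  (1 / 2 ^ n) * ∑ s ∈ Finset.range (n + 1),
    (Real.Gamma (a + n + 1) / (Real.Gamma (a + n - s + 1) * (Nat.factorial s))) *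
    (Real.Gamma (b + n + 1) / (Real.Gamma (b + s + 1) * (Nat.factorial (n - s)))) *
    (x - 1) ^ (n - s) * (x + 1) ^ s
/-- The Jacobi orthogonality normalization `W_n^{a,b}`. -/
noncomputable def Wnorm (n : ℕ) (a b : ℝ) : ℝ :=
  2 ^ (a + b + 1) / (2 * n + a + b + 1) *
    (Real.Gamma (n + a + 1) * Real.Gamma (n + b + 1) /
      (Real.Gamma (n + a + b + 1) * (Nat.factorial n)))

/-- The normalization `N_n^{k,m} = W_n^{k,m} / 2^{2+k+m}`. -/
noncomputable def Nnorm (n k m : ℕ) : ℝ := Wnorm n k m / 2 ^ (2 + k + m)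

/-- The radial basis element `Q_n^{k,m}(r)`. -/
noncomputable def Q (n k m : ℕ) (r : ℝ) : ℝ :=
  r ^ m * jacobiP n k m (2 * r ^ 2 - 1) / Real.sqrt (Nnorm n k m)

open Finset

section JacobiForm

variable {R : Type*} [CommRing R]

noncomputable def jacobiForm (n a b : ℕ) (y z : R) : R :=
  ∑ p ∈ antidiagonal n, ((n + a).choose p.1 : R) * (n + b).choose p.2 * y ^ p.1 * z ^ p.2

/- Multiplying by `y` (resp. `z`) shifts `p.1` (resp. `p.2`); writing `C(A, i - 1)` as
`C(A + 1, i) - C(A, i)` makes the shifted sum a sum over `antidiagonal (n + 1)` whose boundary term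
vanishes, with no truncated subtraction. -/
theorem left_mul_jacobiForm (n a b : ℕ) (y z : R) :
    y * jacobiForm n a (b + 1) y z = ∑ p ∈ antidiagonal (n + 1),
      (((n + a + 1).choose p.1 : R) - (n + a).choose p.1) * (n + b + 1).choose p.2 *
        y ^ p.1 * z ^ p.2 := by
  rw [Nat.sum_antidiagonal_succ, jacobiForm, mul_sum]
  simp only [Nat.choose_succ_succ', Nat.choose_zero_right, Nat.cast_add, sub_self, zero_mul, zero_add,
    add_sub_cancel_right, ← add_assoc]
  refine sum_congr rfl fun p _ => ?_
  ring

theorem right_mul_jacobiForm (n a b : ℕ) (y z : R) :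
    z * jacobiForm n a (b + 1) y z = ∑ p ∈ antidiagonal (n + 1),
      ((n + a).choose p.1 : R) * (((n + b + 2).choose p.2 : R) - (n + b + 1).choose p.2) *
        y ^ p.1 * z ^ p.2 := by
  rw [Nat.sum_antidiagonal_succ', jacobiForm, mul_sum]
  simp only [Nat.choose_succ_succ', Nat.choose_zero_right, Nat.cast_add, sub_self, mul_zero,
    zero_mul, zero_add, ← add_assoc]
  refine sum_congr rfl fun p _ => ?_
  ring

theorem jacobiForm_contiguous (n a b : ℕ) (y z : R) :
    (2 * n + a + b + 3) * jacobiForm (n + 1) a b y z =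
      (n + a + b + 2) * jacobiForm (n + 1) a (b + 1) y z +
        (n + a + 1) * (y - z) * jacobiForm n a (b + 1) y z := by
  rw [mul_assoc, sub_mul, left_mul_jacobiForm, right_mul_jacobiForm, ← sub_eq_zero]
  simp only [jacobiForm, mul_sum, ← sum_sub_distrib, ← sum_add_distrib, add_right_comm n 1,
    ← add_assoc]
  refine sum_eq_zero fun p hp => ?_
  obtain ⟨i, j⟩ := p
  have hij : i + j = n + 1 := mem_antidiagonal.mp hp
  have hA : ((n + a).choose i : R) * (n + a + 1) = (n + a + 1).choose i * (a + j) := by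
    have := Nat.choose_mul_succ_eq (n + a) i
    rw [show n + a + 1 - i = a + j by omega] at this
    exact_mod_cast congrArg (Nat.cast (R := R)) this
  have hB : ((n + b + 1).choose j : R) * (n + b + 2) = (n + b + 1 + 1).choose j * (b + 1 + i) := by
    have := Nat.choose_mul_succ_eq (n + b + 1) j
    rw [show n + b + 1 + 1 - j = b + 1 + i by omega] at this
    exact_mod_cast congrArg (Nat.cast (R := R)) this
  have hij' : (i : R) + j = n + 1 := by exact_mod_cast congrArg (Nat.cast (R := R)) hij
  linear_combination (((n + b + 1 + 1).choose j : R) * hA + ((n + a + 1).choose i : R) * hB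
    + ((n + a + 1).choose i : R) * ((n + b + 1 + 1).choose j : R) * hij') * y ^ i * z ^ j

end JacobiForm

open scoped Nat

theorem Real.Gamma_div_Gamma_mul_factorial (p q : ℕ) :
    Real.Gamma (p + q + 1) / (Real.Gamma (p + 1) * q !) = (p + q).choose q := by
  rw [← Nat.cast_add, Real.Gamma_nat_eq_factorial, Real.Gamma_nat_eq_factorial, add_comm p q,
    Nat.cast_add_choose, mul_comm]

theorem jacobiP_eq_jacobiForm (n a b : ℕ) (x : ℝ) :
    jacobiP n a b x = jacobiForm n a b (x + 1) (x - 1) / 2 ^ n := by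
  rw [jacobiP, jacobiForm, Nat.sum_antidiagonal_eq_sum_range_succ_mk, one_div_mul_eq_div]
  congr 1
  refine sum_congr rfl fun s hs => ?_
  have hsn : s ≤ n := Nat.lt_succ_iff.mp (mem_range.mp hs)
  have hA := Real.Gamma_div_Gamma_mul_factorial (n + a - s) s
  have hB := Real.Gamma_div_Gamma_mul_factorial (b + s) (n - s)
  rw [Nat.sub_add_cancel (by omega), Nat.cast_sub (by omega)] at hA
  rw [show b + s + (n - s) = n + b by omega, Nat.cast_sub hsn] at hB
  push_cast at hA hB
  rw [show (a : ℝ) + n + 1 = n + a - s + s + 1 by ring,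
    show (a : ℝ) + n - s + 1 = n + a - s + 1 by ring,
    show (b : ℝ) + n + 1 = b + s + (n - s) + 1 by ring, hA, hB]
  ring

theorem jacobiP_zero (a b : ℕ) (x : ℝ) : jacobiP 0 a b x = 1 := by
  simp [jacobiP_eq_jacobiForm, jacobiForm]

theorem jacobiP_succ_contiguous (n a b : ℕ) (x : ℝ) :
    (2 * n + a + b + 3) * jacobiP (n + 1) a b x =
      (n + a + b + 2) * jacobiP (n + 1) a (b + 1 : ℕ) x +
        (n + a + 1) * jacobiP n a (b + 1 : ℕ) x := by
  have h := jacobiForm_contiguous n a b (x + 1) (x - 1)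
  rw [show x + 1 - (x - 1) = 2 by ring] at h
  simp only [jacobiP_eq_jacobiForm, pow_succ]
  field_simp
  linear_combination h

theorem Nnorm_eq_factorial (n k m : ℕ) :
    Nnorm n k m = ((n + k)! * (n + m)! : ℝ) / (2 * (2 * n + k + m + 1) * ((n + k + m)! * n !)) := by
  rw [Nnorm, Wnorm, show (k : ℝ) + m + 1 = (k + m + 1 : ℕ) by push_cast; ring, Real.rpow_natCast,
    show (n : ℝ) + k + 1 = (n + k : ℕ) + 1 by push_cast; ring,
    show (n : ℝ) + m + 1 = (n + m : ℕ) + 1 by push_cast; ring,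
    show (n : ℝ) + k + m + 1 = (n + k + m : ℕ) + 1 by push_cast; ring,
    Real.Gamma_nat_eq_factorial, Real.Gamma_nat_eq_factorial, Real.Gamma_nat_eq_factorial,
    show 2 + k + m = (k + m + 1) + 1 by omega, pow_succ]
  field_simp
  ring

theorem Nnorm_pos (n k m : ℕ) : 0 < Nnorm n k m := by
  rw [Nnorm_eq_factorial]
  positivity

theorem Nnorm_succ_right (n k m : ℕ) :
    Nnorm n k m * ((2 * n + k + m + 1) * (n + m + 1)) =
      Nnorm n k (m + 1) * ((2 * n + k + m + 2) * (n + k + m + 1)) := by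
  rw [Nnorm_eq_factorial, Nnorm_eq_factorial, ← add_assoc, ← add_assoc, Nat.factorial_succ,
    Nat.factorial_succ]
  field_simp
  push_cast
  ring

theorem Nnorm_succ_left (n k m : ℕ) :
    Nnorm (n + 1) k m * ((2 * n + k + m + 3) * (n + 1)) =
      Nnorm n k (m + 1) * ((2 * n + k + m + 2) * (n + k + 1)) := by
  rw [Nnorm_eq_factorial, Nnorm_eq_factorial, ← add_assoc, ← add_assoc, add_right_comm n 1 k,
    add_right_comm n 1 m, add_right_comm (n + k) 1 m, Nat.factorial_succ, Nat.factorial_succ,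
    Nat.factorial_succ, Nat.factorial_succ]
  field_simp
  push_cast
  ring

theorem Real.sqrt_mul_sqrt_eq_mul_sqrt_of_mul_eq {c d x y : ℝ} (hc : 0 ≤ c) (hd : 0 ≤ d)
    (h : c * x = d ^ 2 * y) : Real.sqrt c * Real.sqrt x = d * Real.sqrt y := by
  rw [← Real.sqrt_mul hc, h, Real.sqrt_mul (sq_nonneg d), Real.sqrt_sq hd]

theorem sqrt_mul_sqrt_Nnorm_succ_right (n k m : ℕ) :
    Real.sqrt (((n : ℝ) + m + 1) * (n + k + m + 1) /
          ((2 * (n : ℝ) + k + m + 1) * (2 * n + k + m + 2))) *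
        Real.sqrt (Nnorm n k m) =
      (n + k + m + 1) / (2 * n + k + m + 1) * Real.sqrt (Nnorm n k (m + 1)) := by
  refine Real.sqrt_mul_sqrt_eq_mul_sqrt_of_mul_eq (by positivity) (by positivity) ?_
  have h := Nnorm_succ_right n k m
  field_simp
  linear_combination h

theorem sqrt_mul_sqrt_Nnorm_succ_left (n k m : ℕ) :
    Real.sqrt (((n + 1 : ℕ) : ℝ) * ((n + 1 : ℕ) + k) /
          ((2 * ((n + 1 : ℕ) : ℝ) + k + m) * (2 * (n + 1 : ℕ) + k + m + 1))) *
        Real.sqrt (Nnorm (n + 1) k m) =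
      ((n + 1 : ℕ) + k) / (2 * (n + 1 : ℕ) + k + m + 1) * Real.sqrt (Nnorm n k (m + 1)) := by
  refine Real.sqrt_mul_sqrt_eq_mul_sqrt_of_mul_eq (by positivity) (by positivity) ?_
  have h := Nnorm_succ_left n k m
  push_cast
  field_simp
  linear_combination h

theorem mul_Q_eq_of_mul_sqrt_Nnorm_eq {n n' k m : ℕ} {c d : ℝ}
    (h : c * Real.sqrt (Nnorm n k m) = d * Real.sqrt (Nnorm n' k (m + 1))) (r : ℝ) :
    c * Q n' k (m + 1) r =
      d * r ^ (m + 1) * jacobiP n' k (m + 1 : ℕ) (2 * r ^ 2 - 1) / Real.sqrt (Nnorm n k m) := by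
  have hN := Real.sqrt_pos.2 (Nnorm_pos n k m)
  have hN' := Real.sqrt_pos.2 (Nnorm_pos n' k (m + 1))
  rw [Q]
  field_simp
  linear_combination r ^ (m + 1) * jacobiP n' k (m + 1 : ℕ) (2 * r ^ 2 - 1) * h

theorem Q_mul_r_general (k m n : ℕ) (r : ℝ) :
    r * Q n k m r =
      Real.sqrt (((n : ℝ) + m + 1) * (n + k + m + 1) /
          ((2 * (n : ℝ) + k + m + 1) * (2 * n + k + m + 2))) * Q n k (m + 1) r +
        Real.sqrt ((n : ℝ) * (n + k) / ((2 * (n : ℝ) + k + m) * (2 * n + k + m + 1))) *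
          Q (n - 1) k (m + 1) r := by
  have hN := Real.sqrt_pos.2 (Nnorm_pos n k m)
  rw [mul_Q_eq_of_mul_sqrt_Nnorm_eq (sqrt_mul_sqrt_Nnorm_succ_right n k m), Q]
  cases n with
  | zero =>
    simp only [CharP.cast_eq_zero, zero_mul, zero_div, Real.sqrt_zero, add_zero, jacobiP_zero]
    field_simp
    ring
  | succ n =>
    rw [Nat.add_sub_cancel, mul_Q_eq_of_mul_sqrt_Nnorm_eq (sqrt_mul_sqrt_Nnorm_succ_left n k m)]
    have h := jacobiP_succ_contiguous n k m (2 * r ^ 2 - 1)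
    push_cast at h ⊢
    generalize 2 * r ^ 2 - 1 = t at h ⊢
    field_simp
    linear_combination r ^ (m + 1) * h

theorem Q_mul_r (k m n : ℕ) (h : (k, m, n) ≠ (0, 0, 0)) (r : ℝ) :
    r * Q n k m r =
      Real.sqrt (((n : ℝ) + m + 1) * (n + k + m + 1) /
          ((2 * (n : ℝ) + k + m + 1) * (2 * n + k + m + 2))) * Q n k (m + 1) r +
        Real.sqrt ((n : ℝ) * (n + k) / ((2 * (n : ℝ) + k + m) * (2 * n + k + m + 1))) *
          Q (n - 1) k (m + 1) r :=
  Q_mul_r_general k m n r
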